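/- Let U ∈ ℝ and δ > 0, and let S : ℝ → ℝ be strictly antitone on [U,∞) with 0 < S(t) ≤ 1 for every t ≥ U. Set p = S(U)^δ and let μ be the uniform probability measure on (0,p], i.e. μ = (ENNReal.ofReal p)⁻¹ • (Lebesgue measure restricted to (0,p]). Suppose g : ℝ → ℝ is measurable and satisfies g(u) ≥ U and S(g(u))^δ = u for every u ∈ (0,p]. Then for every t ≥ U one has {u ∈ (0,p] : g(u) ≥ t} = (0, S(t)^δ], and consequently μ({u : g(u) ≥ t}) = ENNReal.ofReal(S(t)^δ / p) = ENNReal.ofReal((S(t)/S(U))^δ). -/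
import Mathlib


open MeasureTheory Set

/-- Correctness of the inverse transform sampling scheme in Step MI-1-3. -/
theorem inverse_transform_sampling_delta_adjusted
    (U δ : ℝ) (hδ : 0 < δ) (S : ℝ → ℝ)
    (hanti : StrictAntiOn S (Set.Ici U))
    (hSpos : ∀ t, U ≤ t → 0 < S t) (hSle : ∀ t, U ≤ t → S t ≤ 1)
    (p : ℝ) (hp : p = S U ^ δ)
    (μ : Measure ℝ)
    (hμ : μ = (ENNReal.ofReal p)⁻¹ • (volume.restrict (Set.Ioc 0 p)))
    (g : ℝ → ℝ) (hg : Measurable g)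
    (hgU : ∀ u ∈ Set.Ioc 0 p, U ≤ g u)
    (hgS : ∀ u ∈ Set.Ioc 0 p, S (g u) ^ δ = u)
    (t : ℝ) (ht : U ≤ t) :
    {u ∈ Set.Ioc 0 p | t ≤ g u} = Set.Ioc 0 (S t ^ δ) ∧
    μ {u | t ≤ g u} = ENNReal.ofReal (S t ^ δ / p) ∧
    μ {u | t ≤ g u} = ENNReal.ofReal ((S t / S U) ^ δ) := by
  have hSU : 0 < S U := hSpos U le_rfl
  have hSt : 0 < S t := hSpos t ht
  have hpp : 0 < p := hp ▸ Real.rpow_pos_of_pos hSU δ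
  have hStSU : S t ≤ S U := hanti.antitoneOn (mem_Ici.2 le_rfl) (mem_Ici.2 ht) ht
  have hle : S t ^ δ ≤ p := by
    rw [hp]; exact Real.rpow_le_rpow hSt.le hStSU hδ.le
  have hset : {u ∈ Set.Ioc 0 p | t ≤ g u} = Set.Ioc 0 (S t ^ δ) := by
    ext u
    simp only [mem_sep_iff, mem_Ioc]
    constructor
    · rintro ⟨⟨h0, hup⟩, htg⟩
      refine ⟨h0, ?_⟩
      have hmem : u ∈ Set.Ioc 0 p := ⟨h0, hup⟩
      have hS := hgS u hmem
      rw [← hS]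
      exact Real.rpow_le_rpow (hSpos _ (hgU u hmem)).le
        (hanti.antitoneOn (mem_Ici.2 ht) (mem_Ici.2 (hgU u hmem)) htg) hδ.le
    · rintro ⟨h0, hut⟩
      have hmem : u ∈ Set.Ioc 0 p := ⟨h0, hut.trans hle⟩
      have hgu := hgU u hmem
      have hS : S (g u) ^ δ = u := hgS u hmem
      refine ⟨⟨h0, hut.trans hle⟩, ?_⟩
      by_contra hlt
      push_neg at hlt
      have h1 : S t < S (g u) := hanti (mem_Ici.2 hgu) (mem_Ici.2 ht) hlt
      have h2 : S t ^ δ < S (g u) ^ δ := Real.rpow_lt_rpow hSt.le h1 hδ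
      rw [hS] at h2
      linarith
  refine ⟨hset, ?_⟩
  have hinter : {u | t ≤ g u} ∩ Set.Ioc 0 p = Set.Ioc 0 (S t ^ δ) := by
    rw [← hset]; ext u; simp only [mem_inter_iff, mem_setOf_eq, mem_sep_iff]; tauto
  have hmeas : MeasurableSet {u | t ≤ g u} := measurableSet_le measurable_const hg
  have hμval : μ {u | t ≤ g u} = ENNReal.ofReal (S t ^ δ / p) := by
    rw [hμ, Measure.smul_apply, Measure.restrict_apply hmeas, hinter, smul_eq_mul,
      Real.volume_Ioc, sub_zero, ENNReal.ofReal_div_of_pos hpp,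
      ENNReal.div_eq_inv_mul]
  refine ⟨hμval, ?_⟩
  rw [hμval, Real.div_rpow hSt.le hSU.le, hp]
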